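/- Let 𝒜 be a finite index type and d : 𝒜 → ℕ positive dimensions. For each a ∈ 𝒜 let ρ_a and O_a be (d a)×(d a) complex matrices, and set ρ = ⨂_a ρ_a and O = ⨂_a O_a. Let c_{p,i} ∈ ℂ for 1 ≤ p ≤ q, 1 ≤ i ≤ m, and suppose each U_{p,i} is an ordered product of m' layers, U_{p,i} = ∏_{t=1}^{m'} (Σ_{α=1}^{ℓ_t} ⨂_{a} W^{a}_{p,i,t,α}), where each W^{a}_{p,i,t,α} is a (d a)×(d a) complex matrix. Define Φ(ρ) = Σ_{p=1}^{q} (Σ_{i=1}^{m} c_{p,i} U_{p,i}) ρ (Σ_{j=1}^{m} c_{p,j} U_{p,j})^†. Then Tr(O · Φ(ρ)) = Σ_{p=1}^{q} Σ_{i,j=1}^{m} c_{p,i} conj(c_{p,j}) Σ_{α⃗, α⃗' ∈ Π_{t=1}^{m'} Fin ℓ_t} ∏_{a ∈ 𝒜} Tr((∏_{t=1}^{m'} W^{a}_{p,i,t,α_t}) · ρ_a · (∏_{t=1}^{m'} W^{a}_{p,j,t,α'_t})^† · O_a); in particular the global expectation value is a sum of q·m²·(∏_{t=1}^{m'} ℓ_t)²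 terms, each a product of |𝒜| single-subsystem traces. -/
import Mathlib
open Matrix

def tensorFam {𝒜 : Type*} [Fintype 𝒜] [DecidableEq 𝒜] (d : 𝒜 → ℕ)
    (M : ∀ a, Matrix (Fin (d a)) (Fin (d a)) ℂ) :
    Matrix (∀ a, Fin (d a)) (∀ a, Fin (d a)) ℂ :=
  fun x y => ∏ a, M a (x a) (y a)

section
variable {𝒜 : Type*} [Fintype 𝒜] [DecidableEq 𝒜] {d : 𝒜 → ℕ}

lemma tensorFam_mul (M N : ∀ a, Matrix (Fin (d a)) (Fin (d a)) ℂ) :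
    tensorFam d M * tensorFam d N = tensorFam d (fun a => M a * N a) := by
  ext x z
  simp only [tensorFam, Matrix.mul_apply, ← Finset.prod_mul_distrib]
  rw [Finset.prod_univ_sum]
  simp

lemma tensorFam_one : tensorFam d (fun _ => 1) = 1 := by
  ext x y
  simp only [tensorFam, Matrix.one_apply]
  by_cases h : x = y
  · simp [h]
  · obtain ⟨a, ha⟩ := Function.ne_iff.mp h
    rw [if_neg h]
    exact Finset.prod_eq_zero (Finset.mem_univ a) (by simp [ha])

lemma tensorFam_conjTranspose (M : ∀ a, Matrix (Fin (d a)) (Fin (d a)) ℂ) :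
    (tensorFam d M)ᴴ = tensorFam d (fun a => (M a)ᴴ) := by
  ext x y
  simp [tensorFam, conjTranspose_apply, map_prod]

lemma tensorFam_trace (M : ∀ a, Matrix (Fin (d a)) (Fin (d a)) ℂ) :
    (tensorFam d M).trace = ∏ a, (M a).trace := by
  simp only [Matrix.trace, Matrix.diag, tensorFam]
  rw [Finset.prod_univ_sum]
  simp

lemma tensorFam_list_prod {n : ℕ} (V : Fin n → ∀ a, Matrix (Fin (d a)) (Fin (d a)) ℂ) :
    (List.ofFn fun t => tensorFam d (V t)).prod =
      tensorFam d (fun a => (List.ofFn fun t => V t a).prod) := by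
  induction n with
  | zero => simp [tensorFam_one]
  | succ n ih =>
    simp only [List.ofFn_succ, List.prod_cons, ih, tensorFam_mul]

lemma list_prod_sum {R : Type*} [Semiring R] {n : ℕ} (ℓ : Fin n → ℕ)
    (T : ∀ t : Fin n, Fin (ℓ t) → R) :
    (List.ofFn fun t => ∑ α : Fin (ℓ t), T t α).prod =
      ∑ αs : ∀ t, Fin (ℓ t), (List.ofFn fun t => T t (αs t)).prod := by
  induction n with
  | zero => simp
  | succ n ih =>
    rw [List.ofFn_succ, List.prod_cons, ih, Finset.sum_mul_sum]
    rw [← (Fin.consEquiv (fun t => Fin (ℓ t))).sum_comp]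
    rw [Fintype.sum_prod_type]
    refine Finset.sum_congr rfl fun x _ => Finset.sum_congr rfl fun y _ => ?_
    simp [Fin.consEquiv, List.ofFn_succ]
end

lemma sum_swap4 {M : Type*} [AddCommMonoid M] {α β γ δ : Type*}
    [Fintype α] [Fintype β] [Fintype γ] [Fintype δ]
    (F : α → β → γ → δ → M) :
    ∑ i, ∑ a, ∑ j, ∑ b, F i a j b = ∑ j, ∑ b, ∑ i, ∑ a, F i a j b :=
  calc ∑ i, ∑ a, ∑ j, ∑ b, F i a j b
      = ∑ i, ∑ j, ∑ a, ∑ b, F i a j b :=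
        Finset.sum_congr rfl fun _ _ => Finset.sum_comm
    _ = ∑ j, ∑ i, ∑ a, ∑ b, F i a j b := Finset.sum_comm
    _ = ∑ j, ∑ i, ∑ b, ∑ a, F i a j b :=
        Finset.sum_congr rfl fun _ _ => Finset.sum_congr rfl fun _ _ => Finset.sum_comm
    _ = ∑ j, ∑ b, ∑ i, ∑ a, F i a j b :=
        Finset.sum_congr rfl fun _ _ => Finset.sum_comm

/-- Layered-circuit factorization of the global expectation value.
If `ρ = ⨂_a ρ_a`, `O = ⨂_a O_a`, and each `U_{p,i}` is an ordered product of `m'` layers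
`U_{p,i} = ∏_{t} (Σ_α ⨂_a W^a_{p,i,t,α})`, and
`Φ(ρ) = Σ_p (Σ_i c_{p,i} U_{p,i}) ρ (Σ_j c_{p,j} U_{p,j})ᴴ`, then
`Tr(O Φ(ρ))` equals the sum over `p, i, j` and multi-indices `α⃗, α⃗'` of
`c_{p,i} conj(c_{p,j}) ∏_a Tr((∏_t W^a_{p,i,t,α_t}) ρ_a (∏_t W^a_{p,j,t,α'_t})ᴴ O_a)`,
a sum of `q·m²·(∏_t ℓ_t)²` terms, each a product of `|𝒜|` single-subsystem traces. -/
theorem stmt_5 {𝒜 : Type*} [Fintype 𝒜] [DecidableEq 𝒜] (d : 𝒜 → ℕ)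
    (hd : ∀ a, 0 < d a)
    (ρa Oa : ∀ a, Matrix (Fin (d a)) (Fin (d a)) ℂ)
    (ρ O : Matrix (∀ a, Fin (d a)) (∀ a, Fin (d a)) ℂ)
    (hρ : ρ = tensorFam d ρa) (hO : O = tensorFam d Oa)
    (q m m' : ℕ) (ℓ : Fin m' → ℕ)
    (c : Fin q → Fin m → ℂ)
    (U : Fin q → Fin m → Matrix (∀ a, Fin (d a)) (∀ a, Fin (d a)) ℂ)
    (W : Fin q → Fin m → ∀ t : Fin m', Fin (ℓ t) → ∀ a, Matrix (Fin (d a)) (Fin (d a)) ℂ)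
    (hU : ∀ p i, U p i =
      (List.ofFn fun t : Fin m' => ∑ α : Fin (ℓ t), tensorFam d (W p i t α)).prod)
    (Φ : Matrix (∀ a, Fin (d a)) (∀ a, Fin (d a)) ℂ →
         Matrix (∀ a, Fin (d a)) (∀ a, Fin (d a)) ℂ)
    (hΦ : ∀ σ, Φ σ = ∑ p, (∑ i, c p i • U p i) * σ * (∑ j, c p j • U p j)ᴴ) :
    (O * Φ ρ).trace =
      ∑ p, ∑ i, ∑ j, c p i * (starRingEnd ℂ) (c p j) *
        ∑ αs : ∀ t : Fin m', Fin (ℓ t), ∑ αs' : ∀ t : Fin m', Fin (ℓ t),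
          ∏ a, ((List.ofFn fun t => W p i t (αs t) a).prod * ρa a *
                ((List.ofFn fun t => W p j t (αs' t) a).prod)ᴴ * Oa a).trace := by
  have hU' : ∀ p i, U p i = ∑ αs : ∀ t, Fin (ℓ t),
      tensorFam d (fun a => (List.ofFn fun t => W p i t (αs t) a).prod) := by
    intro p i
    rw [hU, list_prod_sum]
    exact Finset.sum_congr rfl fun αs _ => tensorFam_list_prod _
  have key : ∀ p i j (αs αs' : ∀ t, Fin (ℓ t)),
      (tensorFam d Oa *
        (tensorFam d (fun a => (List.ofFn fun t => W p i t (αs t) a).prod) *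
          tensorFam d ρa *
          (tensorFam d (fun a => (List.ofFn fun t => W p j t (αs' t) a).prod))ᴴ)).trace =
      ∏ a, ((List.ofFn fun t => W p i t (αs t) a).prod * ρa a *
            ((List.ofFn fun t => W p j t (αs' t) a).prod)ᴴ * Oa a).trace := by
    intro p i j αs αs'
    rw [tensorFam_conjTranspose, tensorFam_mul, tensorFam_mul, tensorFam_mul, tensorFam_trace]
    refine Finset.prod_congr rfl fun a _ => ?_
    rw [Matrix.trace_mul_comm]
  rw [hΦ, hρ, hO]
  simp only [hU', Finset.smul_sum, Matrix.mul_sum, Matrix.sum_mul, conjTranspose_sum,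
    conjTranspose_smul, Matrix.smul_mul, Matrix.mul_smul, trace_sum, trace_smul,
    smul_eq_mul, key, Finset.mul_sum]
  refine Finset.sum_congr rfl fun p _ => ?_
  rw [sum_swap4]
  refine Finset.sum_congr rfl fun i _ => ?_
  rw [Finset.sum_comm]
  refine Finset.sum_congr rfl fun j _ => Finset.sum_congr rfl fun αs _ =>
    Finset.sum_congr rfl fun αs' _ => ?_
  rw [starRingEnd_apply]; ring
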